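/- arXiv:2003.05017 — 10 statements merged into one kernel-verified Lean document; each statement's English description precedes it below -/
import Mathlib

section
/- For every positive rational number α there are only finitely many pairs (γ, M), where γ is a nonnegative integer and M is a finite multiset of integers m ≥ 2, satisfying α = 2γ − 2 + Σ_{m ∈ M} (1 − 1/m). -/
/-!
Every term `1 - 1/m` with `m ≥ 2` is at least `1/2`, so `2γ + |M|/2 ≤ α + 2` bounds both `γ` and
`|M|`. Once `γ` and `|M| = k` are fixed, `Σ 1/m` is fixed as well, and there are only finitely
many multisets of `k` positive integers with prescribed sum of reciprocals: the smallest element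
`a` satisfies `1/a ≥ c/k`, hence `a ≤ k/c`, and removing it leaves `k - 1` elements with
reciprocal sum `c - 1/a`.
-/

open Multiset

namespace Multiset

lemma exists_mem_le_card_div_sum_inv {M : Multiset ℕ} (hM : M ≠ 0) (hpos : ∀ m ∈ M, 0 < m) :
    ∃ a ∈ M, (a : ℚ) ≤ card M / (M.map fun m : ℕ => (m : ℚ)⁻¹).sum := by
  obtain ⟨a, haM, hmin⟩ := M.exists_min_image id hM
  have ha : (0 : ℚ) < a := by exact_mod_cast hpos a haM
  have hsum_le : (M.map fun m : ℕ => (m : ℚ)⁻¹).sum ≤ card M * (a : ℚ)⁻¹ := by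
    simpa using (M.map fun m : ℕ => (m : ℚ)⁻¹).sum_le_card_nsmul (a : ℚ)⁻¹ <| by
      simp only [mem_map, forall_exists_index, and_imp, forall_apply_eq_imp_iff₂]
      exact fun m hm => inv_anti₀ ha (by exact_mod_cast hmin m hm)
  have hsum_pos : 0 < (M.map fun m : ℕ => (m : ℚ)⁻¹).sum :=
    (inv_pos.mpr ha).trans_le <| single_le_sum (by simp) _ (mem_map_of_mem _ haM)
  refine ⟨a, haM, (le_div_iff₀ hsum_pos).mpr ?_⟩
  calc (a : ℚ) * (M.map fun m : ℕ => (m : ℚ)⁻¹).sum ≤ a * (card M * (a : ℚ)⁻¹) := by gcongr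
    _ = card M := by field_simp

theorem finite_setOf_card_eq_sum_inv_eq (k : ℕ) (c : ℚ) :
    {M : Multiset ℕ | (∀ m ∈ M, 0 < m) ∧ card M = k ∧
      (M.map fun m : ℕ => (m : ℚ)⁻¹).sum = c}.Finite := by
  induction k generalizing c with
  | zero =>
    refine (Set.finite_singleton 0).subset ?_
    rintro M ⟨-, hcard, -⟩
    exact card_eq_zero.mp hcard
  | succ k ih =>
    refine ((Set.finite_Iic ⌊(k + 1 : ℚ) / c⌋₊).biUnion fun a _ =>
      (ih (c - (a : ℚ)⁻¹)).image (a ::ₘ ·)).subset ?_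
    rintro M ⟨hpos, hcard, rfl⟩
    obtain ⟨a, haM, ha⟩ := exists_mem_le_card_div_sum_inv (card_pos.mp (by omega)) hpos
    rw [hcard] at ha
    refine Set.mem_biUnion (Nat.le_floor (by exact_mod_cast ha))
      ⟨M.erase a, ⟨fun m hm => hpos m (mem_of_mem_erase hm), ?_, ?_⟩, cons_erase haM⟩
    · simp [card_erase_of_mem haM, hcard]
    · rw [← cons_erase haM, map_cons, sum_cons, erase_cons_head]
      ring

lemma card_div_two_le_sum_one_sub_inv {M : Multiset ℕ} (h2 : ∀ m ∈ M, 2 ≤ m) :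
    (card M : ℚ) / 2 ≤ (M.map fun m : ℕ => 1 - (m : ℚ)⁻¹).sum := by
  have := card_nsmul_le_sum (s := M.map fun m : ℕ => 1 - (m : ℚ)⁻¹) (a := 2⁻¹) <| by
    simp only [mem_map, forall_exists_index, and_imp, forall_apply_eq_imp_iff₂]
    intro m hm
    have : (m : ℚ)⁻¹ ≤ 2⁻¹ := inv_anti₀ two_pos (by exact_mod_cast h2 m hm)
    linarith
  simpa [div_eq_mul_inv] using this

end Multiset

theorem stmt_0_general (α : ℚ) :
    {s : ℕ × Multiset ℕ | (∀ m ∈ s.2, 2 ≤ m) ∧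
      α = 2 * (s.1 : ℚ) - 2 + (s.2.map (fun m => 1 - 1 / (m : ℚ))).sum}.Finite := by
  refine ((Set.finite_Iic ⌊(α + 2) / 2⌋₊).biUnion fun γ _ =>
    (Set.finite_Iic ⌊2 * (α + 2)⌋₊).biUnion fun k _ =>
      (finite_setOf_card_eq_sum_inv_eq k (k + 2 * γ - 2 - α)).image (Prod.mk γ)).subset ?_
  rintro ⟨γ, M⟩ ⟨h2, hα⟩
  -- the statement maps over `M` coerced to `Multiset ℚ`
  have hcoe : ((M : Multiset ℚ).map fun m => 1 - 1 / m) = M.map fun m : ℕ => 1 - (m : ℚ)⁻¹ := by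
    simp [map_map]
  have hsplit : (M.map fun m : ℕ => 1 - (m : ℚ)⁻¹).sum =
      card M - (M.map fun m : ℕ => (m : ℚ)⁻¹).sum := by
    simp [sum_map_sub]
  rw [hcoe] at hα
  have hbound := card_div_two_le_sum_one_sub_inv h2
  have hγ : (0 : ℚ) ≤ γ := γ.cast_nonneg
  have hcard : (0 : ℚ) ≤ card M := (card M).cast_nonneg
  refine Set.mem_biUnion (Nat.le_floor ?_) <| Set.mem_biUnion (Nat.le_floor ?_)
    ⟨M, ⟨fun m hm => two_pos.trans_le (h2 m hm), rfl, ?_⟩, rfl⟩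
  all_goals linarith

/-- For every positive rational `α` there are only finitely many pairs `(γ, M)`, where `γ`
is a nonnegative integer and `M` is a finite multiset of integers `m ≥ 2`, satisfying
`α = 2γ − 2 + Σ_{m ∈ M} (1 − 1/m)`. -/
theorem stmt_0 (α : ℚ) (hα : 0 < α) :
    {s : ℕ × Multiset ℕ | (∀ m ∈ s.2, 2 ≤ m) ∧
      α = 2 * (s.1 : ℚ) - 2 + (s.2.map (fun m => 1 - 1 / (m : ℚ))).sum}.Finite :=
  stmt_0_general α
end

section
/- For every positive rational number β and every natural number k, there are only finitely many multisets {m_1, …, m_k} consisting of k integers m_i ≥ 2 such that Σ_{i=1}^k 1/m_i = β. -/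
/-!
Induct on the number of terms. Among `k + 1` unit fractions summing to `β` the largest one
is at least `β / (k + 1)`, so the smallest denominator `m` is at most `(k + 1) / β`; for each
of these finitely many `m`, the remaining `k` terms sum to `β - 1 / m`.
-/

open Multiset

theorem Multiset.exists_mem_sum_le_card_nsmul {α : Type*} [AddCommMonoid α] [LinearOrder α]
    [AddLeftMono α] {s : Multiset α} (hs : s ≠ 0) : ∃ x ∈ s, s.sum ≤ card s • x := by
  obtain ⟨x, hx, hmax⟩ := s.exists_max_image id hs
  exact ⟨x, hx, s.sum_le_card_nsmul x hmax⟩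

def unitFractionReps (k : ℕ) (β : ℚ) : Set (Multiset ℕ) :=
  {M : Multiset ℕ | card M = k ∧ (∀ m ∈ M, 0 < m) ∧ (M.map fun m : ℕ => 1 / (m : ℚ)).sum = β}

lemma cons_mem_unitFractionReps {k : ℕ} {β : ℚ} {m : ℕ} {M : Multiset ℕ}
    (h : m ::ₘ M ∈ unitFractionReps (k + 1) β) : M ∈ unitFractionReps k (β - 1 / m) := by
  obtain ⟨hcard, hpos, hsum⟩ := h
  refine ⟨by simpa using hcard, fun x hx => hpos x (mem_cons_of_mem hx), ?_⟩
  rw [map_cons, sum_cons] at hsum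
  linarith

lemma exists_mem_le_floor_of_mem_unitFractionReps {k : ℕ} {β : ℚ} {M : Multiset ℕ}
    (hM : M ∈ unitFractionReps (k + 1) β) : ∃ m ∈ M, m ≤ ⌊(k + 1 : ℚ) / β⌋₊ := by
  obtain ⟨hcard, hpos, hsum⟩ := hM
  have hne : M.map (fun m : ℕ => 1 / (m : ℚ)) ≠ 0 := by
    rw [Ne, map_eq_zero, ← card_eq_zero, hcard]
    exact k.succ_ne_zero
  obtain ⟨_, hx, hle⟩ := exists_mem_sum_le_card_nsmul hne
  obtain ⟨m, hm, rfl⟩ := mem_map.mp hx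
  have hm_pos : (0 : ℚ) < m := by exact_mod_cast hpos m hm
  have hβ_pos : 0 < β :=
    calc 0 < 1 / (m : ℚ) := by positivity
      _ ≤ β := hsum ▸ single_le_sum (fun _ hy => by
          obtain ⟨n, -, rfl⟩ := mem_map.mp hy; positivity) _ hx
  rw [hsum, card_map, hcard, nsmul_eq_mul, ← mul_div_assoc, mul_one,
    le_div_iff₀ hm_pos] at hle
  refine ⟨m, hm, Nat.le_floor ?_⟩
  rw [le_div_iff₀ hβ_pos]
  push_cast at hle
  linarith

lemma unitFractionReps_succ_subset (k : ℕ) (β : ℚ) :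
    unitFractionReps (k + 1) β ⊆
      ⋃ m ∈ Finset.Iic ⌊(k + 1 : ℚ) / β⌋₊, (m ::ₘ ·) '' unitFractionReps k (β - 1 / m) := by
  intro M hM
  obtain ⟨m, hm, hle⟩ := exists_mem_le_floor_of_mem_unitFractionReps hM
  obtain ⟨M', rfl⟩ := exists_cons_of_mem hm
  exact Set.mem_biUnion (Finset.mem_Iic.mpr hle) ⟨M', cons_mem_unitFractionReps hM, rfl⟩

theorem unitFractionReps_finite (k : ℕ) (β : ℚ) : (unitFractionReps k β).Finite := by
  induction k generalizing β with
  | zero =>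
    exact (Set.finite_singleton 0).subset fun _ hM => card_eq_zero.mp hM.1
  | succ k ih =>
    refine Set.Finite.subset ?_ (unitFractionReps_succ_subset k β)
    exact (Finset.finite_toSet _).biUnion fun m _ => (ih _).image _

theorem stmt_1_general (β : ℚ) (k : ℕ) :
    {M : Multiset ℕ | Multiset.card M = k ∧ (∀ m ∈ M, 2 ≤ m) ∧
      (M.map (fun m => 1 / (m : ℚ))).sum = β}.Finite :=
  (unitFractionReps_finite k β).subset fun _ ⟨hcard, h2, hsum⟩ =>
    -- `(m : ℚ)` makes the statement coerce `M` to `Multiset ℚ` through its monad structure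
    ⟨hcard, fun m hm => (h2 m hm).trans_lt' two_pos, by simpa using hsum⟩

/-- For every positive rational `β` and every natural number `k`, there are only finitely
many multisets of `k` integers `m ≥ 2` with `Σ 1/m = β`. -/
theorem stmt_1 (β : ℚ) (hβ : 0 < β) (k : ℕ) :
    {M : Multiset ℕ | Multiset.card M = k ∧ (∀ m ∈ M, 2 ≤ m) ∧
      (M.map (fun m => 1 / (m : ℚ))).sum = β}.Finite :=
  stmt_1_general β k
end

section
/- For every positive rational number ρ there are only finitely many pairs (γ, M), where γ is a nonnegative integer and M is a finite multiset of integers m ≥ 2, satisfying 2/ρ = 2γ − 2 + Σ_{m ∈ M} (1 − 1/m). -/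
/-!
Fixing the value `c = 2γ + Σ_{m ∈ M} (1 − 1/m)` bounds everything: every summand `1 − 1/m`
is at least `1/2`, so `γ ≤ c/2` and `|M| ≤ 2c`. Once `γ` and `|M| = k` are fixed, the
reciprocal sum `Σ 1/m = k − c + 2γ` is fixed too, and there are only finitely many multisets
of `k` positive integers with a prescribed reciprocal sum `q`: the smallest element `a` has
`q ≤ k/a`, so `a ≤ k/q`, and removing it leaves the same problem for `k − 1` and `q − 1/a`.
-/

open Multiset

theorem Multiset.setOf_card_eq_sum_inv_eq_finite (k : ℕ) (q : ℚ) :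
    {M : Multiset ℕ | (∀ m ∈ M, 0 < m) ∧ card M = k ∧
      (M.map fun m : ℕ => (m : ℚ)⁻¹).sum = q}.Finite := by
  induction k generalizing q with
  | zero =>
    refine (Set.finite_singleton 0).subset ?_
    rintro M ⟨-, hM, -⟩
    exact card_eq_zero.mp hM
  | succ k ih =>
    refine ((Finset.Iic ⌈(k + 1 : ℚ) / q⌉₊).finite_toSet.biUnion
      fun a _ => (ih (q - (a : ℚ)⁻¹)).image (a ::ₘ ·)).subset ?_
    rintro M ⟨hpos, hcard, hsum⟩
    obtain ⟨a, haM, hmax⟩ := exists_max_image (s := M) (fun m : ℕ => (m : ℚ)⁻¹)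
      (card_pos.mp (by omega))
    have ha : (0 : ℚ) < a := by exact_mod_cast hpos a haM
    have hsplit : q = (a : ℚ)⁻¹ + ((M.erase a).map fun m : ℕ => (m : ℚ)⁻¹).sum := by
      conv_lhs => rw [← hsum, ← cons_erase haM]
      rw [map_cons, sum_cons]
    have hq : 0 < q := by
      rw [hsplit]
      refine add_pos_of_pos_of_nonneg (inv_pos.mpr ha) (sum_nonneg fun x hx => ?_)
      obtain ⟨m, -, rfl⟩ := mem_map.mp hx
      positivity
    have hq_le : q ≤ (k + 1) * (a : ℚ)⁻¹ := by
      have := sum_le_card_nsmul _ _ fun x hx => by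
        obtain ⟨m, hm, rfl⟩ := mem_map.mp hx
        exact hmax m hm
      simpa [hsum, hcard] using this
    have ha_le : (a : ℚ) ≤ (k + 1) / q := by
      rw [le_div_iff₀ hq]
      calc (a : ℚ) * q ≤ a * ((k + 1) * (a : ℚ)⁻¹) := by gcongr
        _ = k + 1 := by field_simp
    refine Set.mem_biUnion (x := a) ?_ ⟨M.erase a, ⟨?_, ?_, ?_⟩, cons_erase haM⟩
    · simpa using Nat.cast_le.mp (ha_le.trans (Nat.le_ceil _))
    · exact fun m hm => hpos m (mem_of_mem_erase hm)
    · simp [card_erase_of_mem haM, hcard]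
    · linarith

theorem Multiset.card_div_two_le_sum_one_sub_inv_s2 {M : Multiset ℕ} (hM : ∀ m ∈ M, 2 ≤ m) :
    (card M : ℚ) / 2 ≤ (M.map fun m : ℕ => 1 - (m : ℚ)⁻¹).sum := by
  have := card_nsmul_le_sum (s := M.map fun m : ℕ => 1 - (m : ℚ)⁻¹) (a := 1 / 2) fun x hx => by
    obtain ⟨m, hm, rfl⟩ := mem_map.mp hx
    have : (2 : ℚ) ≤ m := by exact_mod_cast hM m hm
    have : (m : ℚ)⁻¹ ≤ 2⁻¹ := inv_anti₀ two_pos this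
    linarith
  rw [card_map, nsmul_eq_mul] at this
  linarith

theorem setOf_signature_eq_finite (c : ℚ) :
    {s : ℕ × Multiset ℕ | (∀ m ∈ s.2, 2 ≤ m) ∧
      2 * (s.1 : ℚ) + (s.2.map fun m : ℕ => 1 - (m : ℚ)⁻¹).sum = c}.Finite := by
  refine ((Finset.Iic ⌈c / 2⌉₊ ×ˢ Finset.Iic ⌈2 * c⌉₊).finite_toSet.biUnion fun p _ =>
    (setOf_card_eq_sum_inv_eq_finite p.2 (p.2 - (c - 2 * p.1))).image (p.1, ·)).subset ?_
  rintro ⟨γ, M⟩ ⟨hM, hc⟩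
  have hcard := card_div_two_le_sum_one_sub_inv_s2 hM
  have hγ : (γ : ℚ) ≤ c / 2 := by linarith [(card M).cast_nonneg (α := ℚ)]
  have hk : (card M : ℚ) ≤ 2 * c := by linarith [γ.cast_nonneg (α := ℚ)]
  refine Set.mem_biUnion (x := (γ, card M)) ?_ ⟨M, ⟨?_, rfl, ?_⟩, rfl⟩
  · simpa using ⟨Nat.cast_le.mp (hγ.trans (Nat.le_ceil _)),
      Nat.cast_le.mp (hk.trans (Nat.le_ceil _))⟩
  · exact fun m hm => by have := hM m hm; omega
  · rw [sum_map_sub] at hc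
    simp only [map_const', sum_replicate, nsmul_eq_mul, mul_one] at hc
    linarith

theorem stmt_2_general (ρ : ℚ) :
    {s : ℕ × Multiset ℕ | (∀ m ∈ s.2, 2 ≤ m) ∧
      2 / ρ = 2 * (s.1 : ℚ) - 2 + (s.2.map (fun m => 1 - 1 / (m : ℚ))).sum}.Finite := by
  refine (setOf_signature_eq_finite (2 / ρ + 2)).subset ?_
  rintro s ⟨hM, hρ⟩
  refine ⟨hM, ?_⟩
  -- `s.2` is cast to `Multiset ℚ` in the statement through the multiset monad (`bind`/`pure`).
  simp only [Multiset.pure_def, Multiset.bind_def, Multiset.bind_singleton, Multiset.map_map,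
    Function.comp_def, one_div] at hρ
  linarith

/-- For every positive rational `ρ` there are only finitely many signatures `(γ, M)`
satisfying `2/ρ = 2γ − 2 + Σ_{m ∈ M} (1 − 1/m)`. -/
theorem stmt_2 (ρ : ℚ) (hρ : 0 < ρ) :
    {s : ℕ × Multiset ℕ | (∀ m ∈ s.2, 2 ≤ m) ∧
      2 / ρ = 2 * (s.1 : ℚ) - 2 + (s.2.map (fun m => 1 - 1 / (m : ℚ))).sum}.Finite :=
  stmt_2_general ρ
end

section
/- The set of pairs (γ, M), where γ is a nonnegative integer and M is a finite multiset of integers m ≥ 2, such that μ := 2γ − 2 + Σ_{m ∈ M} (1 − 1/m) is positive and 2/μ is a positive integer, is finite. -/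
/-!
If `μ = 2/n` with `n ≥ 1`, then `μ ≤ 2`; since every term `1 - 1/m` is at least `1/2`, this bounds
`γ ≤ 2` and `#M ≤ 8`. Adding `1/n` twice turns the defining equation into
`Σ_{m ∈ n ::ₘ n ::ₘ M} 1/m = 2γ - 2 + #M`, an Egyptian-fraction equation with a bounded number of
terms and one of finitely many right-hand sides. Such an equation has finitely many solutions: the
largest term `1/m₀` is at least the average, which bounds `m₀`, and one inducts on the number of
terms. Hence `n ::ₘ n ::ₘ M`, and with it its sub-multiset `M`, ranges over a finite set.
-/

namespace Multiset

/-- In `s.2.map (fun m => 1 - 1 / (m : ℚ))` the binder type is `ℚ`, so Lean elaborates `s.2` as the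
monadic coercion of a `Multiset ℕ` into `Multiset ℚ`. -/
theorem map_bind_pure_natCast (M : Multiset ℕ) (f : ℚ → ℚ) :
    (M >>= fun a => pure (a : ℚ)).map f = M.map fun m : ℕ => f m := by
  simp [map_map]

theorem sum_map_one_sub_one_div (M : Multiset ℕ) :
    (M.map fun m : ℕ => 1 - 1 / (m : ℚ)).sum =
      card M - (M.map fun m : ℕ => 1 / (m : ℚ)).sum := by
  simp [sum_map_sub]

theorem card_div_two_le_sum_map_one_sub_one_div {M : Multiset ℕ} (hM : ∀ m ∈ M, 2 ≤ m) :
    (card M : ℚ) / 2 ≤ (M.map fun m : ℕ => 1 - 1 / (m : ℚ)).sum := by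
  have hterm : ∀ x ∈ M.map fun m : ℕ => 1 - 1 / (m : ℚ), 1 / 2 ≤ x := by
    simp only [mem_map, forall_exists_index, and_imp, forall_apply_eq_imp_iff₂]
    intro m hm
    have : 1 / (m : ℚ) ≤ 1 / 2 := one_div_le_one_div_of_le two_pos (by exact_mod_cast hM m hm)
    linarith
  simpa [div_eq_mul_inv] using card_nsmul_le_sum hterm

theorem finite_setOf_card_eq_sum_map_one_div_eq (k : ℕ) (q : ℚ) :
    {M : Multiset ℕ | card M = k ∧ (∀ m ∈ M, 0 < m) ∧
      (M.map fun m : ℕ => 1 / (m : ℚ)).sum = q}.Finite := by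
  induction k generalizing q with
  | zero =>
    refine (Set.finite_singleton 0).subset ?_
    rintro M ⟨hcard, -, -⟩
    exact card_eq_zero.mp hcard
  | succ k ih =>
    refine ((Set.finite_Iic ⌈(k + 1 : ℚ) / q⌉₊).biUnion fun m _ =>
      (ih (q - 1 / m)).image (m ::ₘ ·)).subset ?_
    rintro M ⟨hcard, hpos, hsum⟩
    have hM : M ≠ 0 := by
      rintro rfl
      simp at hcard
    obtain ⟨m₀, hm₀, hmax⟩ := exists_max_image (fun m : ℕ => 1 / (m : ℚ)) hM
    have hm₀_pos : (0 : ℚ) < m₀ := by exact_mod_cast hpos m₀ hm₀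
    have hq_pos : 0 < q := by
      have := single_le_sum (fun x hx => by obtain ⟨m, -, rfl⟩ := mem_map.mp hx; positivity)
        _ (mem_map_of_mem (fun m : ℕ => 1 / (m : ℚ)) hm₀)
      linarith [one_div_pos.mpr hm₀_pos]
    have hq_le : q ≤ (k + 1) * (1 / m₀) := by
      have := sum_le_card_nsmul (M.map fun m : ℕ => 1 / (m : ℚ)) (1 / m₀) (by
        simpa only [mem_map, forall_exists_index, and_imp, forall_apply_eq_imp_iff₂] using hmax)
      rwa [hsum, card_map, hcard, nsmul_eq_mul, Nat.cast_succ] at this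
    have hm₀_le : (m₀ : ℚ) ≤ (k + 1) / q := by
      rw [le_div_iff₀ hq_pos]
      calc (m₀ : ℚ) * q ≤ m₀ * ((k + 1) * (1 / m₀)) := by gcongr
        _ = k + 1 := by field_simp
    refine Set.mem_biUnion (x := m₀) (Nat.cast_le.mp (hm₀_le.trans (Nat.le_ceil _))) ?_
    refine ⟨M.erase m₀, ⟨?_, fun m hm => hpos m (mem_of_mem_erase hm), ?_⟩, cons_erase hm₀⟩
    · rw [card_erase_of_mem hm₀, hcard, Nat.pred_succ]
    · rw [← hsum, ← sum_map_erase hm₀]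
      ring

end Multiset

/-- The set of signatures `(γ, M)` such that `μ := 2γ − 2 + Σ_{m ∈ M}(1 − 1/m)` is positive
and `2/μ` is a positive integer, is finite. -/
theorem stmt_3 :
    {s : ℕ × Multiset ℕ | (∀ m ∈ s.2, 2 ≤ m) ∧
      0 < 2 * (s.1 : ℚ) - 2 + (s.2.map (fun m => 1 - 1 / (m : ℚ))).sum ∧
      ∃ n : ℕ, 0 < n ∧
        2 / (2 * (s.1 : ℚ) - 2 + (s.2.map (fun m => 1 - 1 / (m : ℚ))).sum) = n}.Finite := by
  refine ((Set.finite_Iio (3 : ℕ)).biUnion fun γ _ => (Set.finite_Iio (9 : ℕ)).biUnion fun k _ =>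
    (Multiset.finite_setOf_card_eq_sum_map_one_div_eq (k + 2) (2 * γ - 2 + k)).biUnion fun M' _ =>
      (Set.finite_singleton γ).prod (Set.finite_Iic M')).subset ?_
  rintro ⟨γ, M⟩ ⟨hM, hμ_pos, n, hn, hμn⟩
  simp only [Multiset.map_bind_pure_natCast] at hM hμ_pos hμn
  have hn' : (1 : ℚ) ≤ n := by exact_mod_cast hn
  have hμ : 2 * (γ : ℚ) - 2 + (M.map fun m : ℕ => 1 - 1 / (m : ℚ)).sum = 2 / n := by
    rw [← hμn, div_div_cancel₀ two_ne_zero]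
  have hμ_le : (2 : ℚ) / n ≤ 2 := div_le_self zero_le_two hn'
  have hcard := Multiset.card_div_two_le_sum_map_one_sub_one_div hM
  have hγ : γ < 3 := by
    by_contra! h
    have : (3 : ℚ) ≤ γ := by exact_mod_cast h
    linarith [M.card.cast_nonneg (α := ℚ)]
  have hk : M.card < 9 := by
    by_contra! h
    have : (9 : ℚ) ≤ M.card := by exact_mod_cast h
    linarith [(Nat.cast_nonneg γ : (0 : ℚ) ≤ γ)]
  have hM' : n ::ₘ n ::ₘ M ∈ {M' : Multiset ℕ | M'.card = M.card + 2 ∧ (∀ m ∈ M', 0 < m) ∧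
      (M'.map fun m : ℕ => 1 / (m : ℚ)).sum = 2 * γ - 2 + M.card} := by
    refine ⟨by simp, ?_, ?_⟩
    · simp only [Multiset.mem_cons, forall_eq_or_imp]
      exact ⟨hn, hn, fun m hm => (hM m hm).trans_lt' two_pos⟩
    · rw [Multiset.sum_map_one_sub_one_div] at hμ
      simp only [Multiset.map_cons, Multiset.sum_cons]
      have : (2 : ℚ) / n = 1 / n + 1 / n := by ring
      linarith
  simp only [Set.mem_iUnion]
  exact ⟨γ, hγ, M.card, hk, _, hM', rfl, (M.le_cons_self n).trans (Multiset.le_cons_self _ n)⟩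
end

section
/- Let p be a prime, k ≥ 1 an integer, and a a nonzero element of ZMod p. The number t_k of k-tuples (x_1, …, x_k) ∈ (ZMod p)^k with x_i ≠ 0 for every i and x_1 + ⋯ + x_k = a is given by t_k = ((p−1)^k − (−1)^k)/p; equivalently, p·t_k = (p−1)^k − (−1)^k as integers. In particular t_k is independent of the choice of the nonzero element a. -/
/-!
Removing the last coordinate identifies the nonzero `(k+1)`-tuples with sum `a` with the
nonzero `k`-tuples whose sum is not `a` (the last entry is forced to be `a - ∑ yᵢ`). Hence
`t_{k+1} + t_k = (n-1)^k` in any finite abelian group of order `n`, and with `t_0 = 0` an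
induction gives `n t_k = (n-1)^k - (-1)^k`.
-/

lemma Nat.card_subtype_and_add_card_subtype_and_not {α : Type*} [Finite α] (P Q : α → Prop) :
    Nat.card {x // P x ∧ Q x} + Nat.card {x // P x ∧ ¬Q x} = Nat.card {x // P x} := by
  classical
  rw [← Nat.card_congr (Equiv.subtypeSubtypeEquivSubtypeInter P Q),
    ← Nat.card_congr (Equiv.subtypeSubtypeEquivSubtypeInter P fun x => ¬Q x),
    ← Nat.card_sum, Nat.card_congr (Equiv.sumCompl fun x : {x // P x} => Q x)]

lemma card_nonzero_tuples {M : Type*} [Zero M] [Finite M] (k : ℕ) :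
    Nat.card {x : Fin k → M // ∀ i, x i ≠ 0} = (Nat.card M - 1) ^ k := by
  classical
  have : Fintype M := Fintype.ofFinite M
  rw [Nat.card_congr (Equiv.subtypePiEquivPi (p := fun _ (g : M) => g ≠ 0)), Nat.card_pi]
  simp

section NonzeroTuples

variable {G : Type*} [AddCommGroup G]

def nonzeroTuplesSumEquiv (k : ℕ) (a : G) :
    {x : Fin (k + 1) → G // (∀ i, x i ≠ 0) ∧ ∑ i, x i = a} ≃
      {y : Fin k → G // (∀ i, y i ≠ 0) ∧ ∑ i, y i ≠ a} where
  toFun x := ⟨Fin.init x.1, fun i => x.2.1 _, fun h => x.2.1 (Fin.last k) <| by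
    have hsum := x.2.2
    rw [Fin.sum_univ_castSucc] at hsum
    exact add_eq_left.mp (hsum.trans h.symm)⟩
  invFun y := ⟨Fin.snoc y.1 (a - ∑ i, y.1 i),
    Fin.lastCases (by simpa using sub_ne_zero.mpr y.2.2.symm) (by simpa using y.2.1),
    by simp [Fin.sum_univ_castSucc]⟩
  left_inv := by
    rintro ⟨x, hx, rfl⟩
    have hlast : ∑ i, x i - ∑ i, Fin.init x i = x (Fin.last k) := by
      simp [Fin.sum_univ_castSucc, Fin.init]
    exact Subtype.ext (by simp only [hlast, Fin.snoc_init_self])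
  right_inv y := Subtype.ext (by simp)

lemma card_nonzero_tuples_sum_eq_succ_add [Finite G] (k : ℕ) (a : G) :
    Nat.card {x : Fin (k + 1) → G // (∀ i, x i ≠ 0) ∧ ∑ i, x i = a}
      + Nat.card {x : Fin k → G // (∀ i, x i ≠ 0) ∧ ∑ i, x i = a}
      = (Nat.card G - 1) ^ k := by
  rw [Nat.card_congr (nonzeroTuplesSumEquiv k a), add_comm,
    Nat.card_subtype_and_add_card_subtype_and_not, card_nonzero_tuples]

theorem card_mul_card_nonzero_tuples_sum_eq [Finite G] (k : ℕ) {a : G} (ha : a ≠ 0) :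
    (Nat.card G : ℤ) * Nat.card {x : Fin k → G // (∀ i, x i ≠ 0) ∧ ∑ i, x i = a}
      = ((Nat.card G : ℤ) - 1) ^ k - (-1) ^ k := by
  induction k with
  | zero => simp [ha.symm]
  | succ k ih =>
    have hrec := congrArg (Nat.cast : ℕ → ℤ) (card_nonzero_tuples_sum_eq_succ_add k a)
    push_cast [Nat.one_le_iff_ne_zero.mpr (Nat.card_pos (α := G)).ne'] at hrec
    linear_combination (Nat.card G : ℤ) * hrec - ih

end NonzeroTuples

theorem stmt_7_general (p : ℕ) (hp : p.Prime) (k : ℕ) (a : ZMod p) (ha : a ≠ 0) :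
    (p : ℤ) * Nat.card {x : Fin k → ZMod p // (∀ i, x i ≠ 0) ∧ ∑ i, x i = a}
      = ((p : ℤ) - 1) ^ k - (-1) ^ k := by
  have : NeZero p := ⟨hp.ne_zero⟩
  simpa [Nat.card_zmod] using card_mul_card_nonzero_tuples_sum_eq k ha

/-- For a fixed nonzero `a` in `ZMod p`, the number `t_k` of `k`-tuples with all entries
nonzero and sum `a` satisfies `p·t_k = (p−1)^k − (−1)^k`; in particular it is independent
of the choice of `a`. -/
theorem stmt_7 (p : ℕ) (hp : p.Prime) (k : ℕ) (hk : 1 ≤ k) (a : ZMod p) (ha : a ≠ 0) :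
    (p : ℤ) * Nat.card {x : Fin k → ZMod p // (∀ i, x i ≠ 0) ∧ ∑ i, x i = a}
      = ((p : ℤ) - 1) ^ k - (-1) ^ k :=
  stmt_7_general p hp k a ha
end

section
/- Let γ ≥ 0 and k ≥ 1 be integers, let p be a prime, and let Γ be the group with presentation ⟨A_1, B_1, …, A_γ, B_γ, X_1, …, X_k | ∏_{j=1}^γ [A_j,B_j] · X_1 X_2 ⋯ X_k = 1, X_1^p = ⋯ = X_k^p = 1⟩. Then the number of normal subgroups N of index p in Γ such that X_i ∉ N for every i = 1, …, k equals p^{2γ−1}·((p−1)^{k−1} + (−1)^k); equivalently, the number of surjective homomorphisms θ : Γ → ZMod p with θ(X_i) ≠ 0 for all i equals p^{2γ−1}·(p−1)·((p−1)^{k−1} + (−1)^k). (When γ = 0 these expressions are still integers, since p divides (p−1)^{k−1} + (−1)^k.) -/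
/-- The long relator `∏_{j=1}^γ [A_j, B_j] · X_1 ⋯ X_k` of a Fuchsian group presentation,
on generators `A_j = Sum.inl (Sum.inl j)`, `B_j = Sum.inl (Sum.inr j)`, `X_i = Sum.inr i`. -/
def longRelator (γ k : ℕ) : FreeGroup ((Fin γ ⊕ Fin γ) ⊕ Fin k) :=
  ((List.finRange γ).map (fun j =>
    FreeGroup.of (Sum.inl (Sum.inl j)) * FreeGroup.of (Sum.inl (Sum.inr j)) *
      (FreeGroup.of (Sum.inl (Sum.inl j)))⁻¹ * (FreeGroup.of (Sum.inl (Sum.inr j)))⁻¹)).prod *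
  ((List.finRange k).map (fun i => FreeGroup.of (Sum.inr i))).prod

/-- Relators of the presentation
`⟨A_j, B_j, X_i | ∏ [A_j,B_j] · X_1 ⋯ X_k, X_1^p, …, X_k^p⟩`. -/
def sigRels (γ k p : ℕ) : Set (FreeGroup ((Fin γ ⊕ Fin γ) ⊕ Fin k)) :=
  {longRelator γ k} ∪ Set.range (fun i : Fin k => (FreeGroup.of (Sum.inr i)) ^ p)

/-! Since `Multiplicative (ZMod p)` is abelian of exponent `p`, a homomorphism `θ` from `Γ` to it
is a free choice of the images of the `A_j, B_j` together with images of the `X_i` whose product is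
`1`. So the `θ` with all `θ X_i ≠ 1` number `p^{2γ} N_k`, where `N_k` counts the `k`-tuples of
nonzero residues summing to `0`; deleting the last entry gives `N_k + N_{k+1} = (p - 1)^k`, whence
`p N_k = (p - 1)^k + (-1)^k (p - 1)`. Each such `θ` is surjective, and the surjections with a given
kernel of index `p` are the `p - 1` composites of one of them with the automorphisms of `ZMod p`. -/

section NontrivialTuples

variable (M : Type*) [CommGroup M]

def nontrivialTuplesProdOne (k : ℕ) : Set (Fin k → M) :=
  {x | (∀ i, x i ≠ 1) ∧ ∏ i, x i = 1}

def nontrivialTuplesProdOneSuccEquiv (k : ℕ) :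
    nontrivialTuplesProdOne M (k + 1) ≃ {y : Fin k → M // (∀ i, y i ≠ 1) ∧ ∏ i, y i ≠ 1} where
  toFun x := ⟨Fin.init x.1, fun i => x.2.1 _, fun h => x.2.1 (Fin.last k) <| by
    simp only [Fin.init] at h
    simpa [Fin.prod_univ_castSucc, h] using x.2.2⟩
  invFun y := ⟨Fin.snoc y.1 (∏ i, y.1 i)⁻¹, by
    constructor
    · refine Fin.lastCases ?_ fun i => ?_
      · simpa using y.2.2
      · simpa using y.2.1 i
    · simp [Fin.prod_univ_castSucc]⟩
  left_inv x := by
    have hx := x.2.2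
    rw [Fin.prod_univ_castSucc, mul_eq_one_iff_inv_eq] at hx
    ext1
    simp [Fin.init, hx]
  right_inv y := by
    ext1
    simp

variable [Finite M]

lemma card_nontrivialTuples (k : ℕ) :
    Nat.card {y : Fin k → M // ∀ i, y i ≠ 1} = (Nat.card M - 1) ^ k := by
  have := Fintype.ofFinite M
  classical
  rw [Nat.card_congr (Equiv.subtypePiEquivPi (p := fun _ y => y ≠ 1)), Nat.card_pi,
    Finset.prod_const, Finset.card_univ, Fintype.card_fin, Nat.card_eq_fintype_card,
    Fintype.card_subtype_compl, Fintype.card_subtype_eq, Nat.card_eq_fintype_card]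

lemma card_nontrivialTuplesProdOne_add_succ (k : ℕ) :
    Nat.card (nontrivialTuplesProdOne M k) + Nat.card (nontrivialTuplesProdOne M (k + 1)) =
      (Nat.card M - 1) ^ k := by
  classical
  rw [Nat.card_congr (nontrivialTuplesProdOneSuccEquiv M k), ← card_nontrivialTuples M k,
    ← Nat.card_sum]
  exact Nat.card_congr <|
    (Equiv.sumCongr (Equiv.subtypeSubtypeEquivSubtypeInter _ _).symm
      (Equiv.subtypeSubtypeEquivSubtypeInter _ _).symm).trans (Equiv.sumCompl _)

theorem card_nontrivialTuplesProdOne (k : ℕ) :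
    (Nat.card M : ℤ) * Nat.card (nontrivialTuplesProdOne M k) =
      ((Nat.card M : ℤ) - 1) ^ k + (-1) ^ k * ((Nat.card M : ℤ) - 1) := by
  induction k with
  | zero =>
    have : nontrivialTuplesProdOne M 0 = Set.univ :=
      Set.eq_univ_of_forall fun _ => ⟨finZeroElim, by simp⟩
    simp [this]
  | succ k ih =>
    have hrec := card_nontrivialTuplesProdOne_add_succ M k
    have hpos : 1 ≤ Nat.card M := Nat.card_pos
    zify [hpos] at hrec
    linear_combination (Nat.card M : ℤ) * hrec - ih

end NontrivialTuples

section PresentedGroupHom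

variable {α H : Type*} [Group H]

def PresentedGroup.homEquiv (rels : Set (FreeGroup α)) :
    (PresentedGroup rels →* H) ≃ {f : α → H // ∀ r ∈ rels, FreeGroup.lift f r = 1} where
  toFun θ := ⟨fun a => θ (.of a), fun r hr => by
    have hlift : FreeGroup.lift (fun a => θ (.of a)) = θ.comp (PresentedGroup.mk rels) :=
      FreeGroup.ext_hom _ _ fun _ => FreeGroup.lift_apply_of
    rw [hlift, MonoidHom.comp_apply, PresentedGroup.one_of_mem hr, map_one]⟩
  invFun f := PresentedGroup.toGroup f.2
  left_inv θ := PresentedGroup.ext fun _ => PresentedGroup.toGroup.of _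
  right_inv f := Subtype.ext <| funext fun _ => PresentedGroup.toGroup.of _

end PresentedGroupHom

section SignatureHom

variable {γ k p : ℕ} {M : Type*} [CommGroup M]

lemma lift_longRelator (f : (Fin γ ⊕ Fin γ) ⊕ Fin k → M) :
    FreeGroup.lift f (longRelator γ k) = ∏ i, f (Sum.inr i) := by
  simp [longRelator, map_list_prod, Fin.prod_univ_def, List.map_map, Function.comp_def]

lemma lift_sigRels_eq_one_iff (hM : ∀ x : M, x ^ p = 1) (f : (Fin γ ⊕ Fin γ) ⊕ Fin k → M) :
    (∀ r ∈ sigRels γ k p, FreeGroup.lift f r = 1) ↔ ∏ i, f (Sum.inr i) = 1 := by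
  simp [sigRels, lift_longRelator, hM]

def sigRelsHomEquiv (hM : ∀ x : M, x ^ p = 1) :
    {θ : PresentedGroup (sigRels γ k p) →* M // ∀ i, θ (.of (.inr i)) ≠ 1} ≃
      (Fin γ ⊕ Fin γ → M) × nontrivialTuplesProdOne M k where
  toFun θ := (fun j => θ.1 (.of (.inl j)), ⟨fun i => θ.1 (.of (.inr i)), θ.2,
    (lift_sigRels_eq_one_iff hM _).1 (PresentedGroup.homEquiv _ θ.1).2⟩)
  invFun ax := ⟨PresentedGroup.toGroup ((lift_sigRels_eq_one_iff hM (Sum.elim ax.1 ax.2.1)).2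
      (by simpa using ax.2.2.2)), fun i => by simpa [PresentedGroup.toGroup.of] using ax.2.2.1 i⟩
  left_inv θ := Subtype.ext <| PresentedGroup.ext <| by
    rintro (j | i) <;> simp [PresentedGroup.toGroup.of]
  right_inv ax := by
    simp [PresentedGroup.toGroup.of]

theorem card_sigRelsHom_of_ne_one [Finite M] (hM : ∀ x : M, x ^ p = 1) :
    (Nat.card M : ℤ) *
        Nat.card {θ : PresentedGroup (sigRels γ k p) →* M // ∀ i, θ (.of (.inr i)) ≠ 1} =
      (Nat.card M : ℤ) ^ (2 * γ) *
        (((Nat.card M : ℤ) - 1) ^ k + (-1) ^ k * ((Nat.card M : ℤ) - 1)) := by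
  rw [Nat.card_congr (sigRelsHomEquiv hM), Nat.card_prod, Nat.card_fun, Nat.card_sum, Nat.card_fin,
    ← card_nontrivialTuplesProdOne]
  push_cast
  ring

end SignatureHom

section SurjectiveHomKernels

variable {G M : Type*} [Group G] [Group M]

noncomputable def surjectiveHomKerEquiv (N : Subgroup G) [N.Normal] :
    {θ : G →* M // Function.Surjective θ ∧ θ.ker = N} ≃ (G ⧸ N ≃* M) where
  toFun θ := (QuotientGroup.quotientMulEquivOfEq θ.2.2.symm).trans
    (QuotientGroup.quotientKerEquivOfSurjective θ.1 θ.2.1)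
  invFun e := ⟨e.toMonoidHom.comp (QuotientGroup.mk' N),
    e.surjective.comp (QuotientGroup.mk'_surjective N), by ext; simp⟩
  left_inv θ := rfl
  right_inv e := by
    ext x
    induction x using QuotientGroup.induction_on
    rfl

variable {p : ℕ} [Fact p.Prime]

lemma surjective_of_map_ne_one (hM : Nat.card M = p) (θ : G →* M) {g : G} (hg : θ g ≠ 1) :
    Function.Surjective θ := by
  intro y
  obtain ⟨n, hn⟩ := Subgroup.mem_zpowers_iff.1 (mem_zpowers_of_prime_card hM hg (g' := y))
  exact ⟨g ^ n, by rw [map_zpow, hn]⟩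

noncomputable def surjectiveHomKerEquivMulAut (hM : Nat.card M = p) (N : Subgroup G) [N.Normal]
    (hN : N.index = p) : {θ : G →* M // Function.Surjective θ ∧ θ.ker = N} ≃ MulAut M :=
  let e : G ⧸ N ≃* M := mulEquivOfPrimeCardEq hN hM
  (surjectiveHomKerEquiv N).trans
    { toFun f := e.symm.trans f
      invFun f := e.trans f
      left_inv f := by ext; simp
      right_inv f := by ext; simp }

theorem card_surjectiveHom_eq_card_normal_mul (hM : Nat.card M = p) (P : Subgroup G → Prop) :
    Nat.card {θ : G →* M // Function.Surjective θ ∧ P θ.ker} =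
      Nat.card {N : Subgroup G // N.Normal ∧ N.index = p ∧ P N} * (p - 1) := by
  let byKernel : {θ : G →* M // Function.Surjective θ ∧ P θ.ker} ≃
      Σ N : {N : Subgroup G // N.Normal ∧ N.index = p ∧ P N},
        {θ : G →* M // Function.Surjective θ ∧ θ.ker = N} :=
    { toFun θ := ⟨⟨θ.1.ker, inferInstance, by
          rw [Subgroup.index_ker, MonoidHom.range_eq_top.2 θ.2.1, Subgroup.card_top, hM], θ.2.2⟩,
        ⟨θ.1, θ.2.1, rfl⟩⟩
      invFun Nθ := ⟨Nθ.2.1, Nθ.2.2.1, (congrArg P Nθ.2.2.2).mpr Nθ.1.2.2.2⟩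
      left_inv θ := rfl
      right_inv := by
        rintro ⟨⟨N, hN⟩, θ, hθ, hker : θ.ker = N⟩
        subst hker
        rfl }
  have : Finite M := Nat.finite_of_card_ne_zero (hM ▸ (Fact.out : p.Prime).ne_zero)
  have : IsCyclic M := isCyclic_of_prime_card hM
  have fibre (N : {N : Subgroup G // N.Normal ∧ N.index = p ∧ P N}) :
      {θ : G →* M // Function.Surjective θ ∧ θ.ker = N} ≃ MulAut M := by
    have := N.2.1
    exact surjectiveHomKerEquivMulAut hM N.1 N.2.2.1
  rw [Nat.card_congr ((byKernel.trans (Equiv.sigmaCongrRight fibre)).trans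
      (Equiv.sigmaEquivProd _ _)),
    Nat.card_prod, IsCyclic.card_mulAut, hM, Nat.totient_prime Fact.out]

end SurjectiveHomKernels

/-- The number of normal subgroups `N` of index `p` of
`Γ = ⟨A_j, B_j, X_i | ∏ [A_j,B_j] · X_1 ⋯ X_k, X_i^p⟩` avoiding all the `X_i` is
`p^{2γ−1}·((p−1)^{k−1} + (−1)^k)`; equivalently, the number of surjective homomorphisms
`θ : Γ → ZMod p` with `θ(X_i) ≠ 0` for all `i` is `p^{2γ−1}·(p−1)·((p−1)^{k−1} + (−1)^k)`.
(Both identities are stated multiplied through by `p`, so that they make sense for `γ = 0`.) -/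
theorem stmt_9 (γ k p : ℕ) (hk : 1 ≤ k) (hp : p.Prime) :
    (p : ℤ) * Nat.card {N : Subgroup (PresentedGroup (sigRels γ k p)) //
        N.Normal ∧ N.index = p ∧ ∀ i : Fin k, PresentedGroup.of (Sum.inr i) ∉ N}
      = (p : ℤ) ^ (2 * γ) * (((p : ℤ) - 1) ^ (k - 1) + (-1) ^ k) ∧
    (p : ℤ) * Nat.card {θ : PresentedGroup (sigRels γ k p) →* Multiplicative (ZMod p) //
        Function.Surjective θ ∧ ∀ i : Fin k, θ (PresentedGroup.of (Sum.inr i)) ≠ 1}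
      = (p : ℤ) ^ (2 * γ) * ((p : ℤ) - 1) * (((p : ℤ) - 1) ^ (k - 1) + (-1) ^ k) := by
  have : Fact p.Prime := ⟨hp⟩
  have hM : Nat.card (Multiplicative (ZMod p)) = p := by simp
  have hsurj : Nat.card {θ : PresentedGroup (sigRels γ k p) →* Multiplicative (ZMod p) //
        Function.Surjective θ ∧ ∀ i : Fin k, θ (PresentedGroup.of (Sum.inr i)) ≠ 1} =
      Nat.card {θ : PresentedGroup (sigRels γ k p) →* Multiplicative (ZMod p) //
        ∀ i : Fin k, θ (PresentedGroup.of (Sum.inr i)) ≠ 1} :=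
    Nat.card_congr <| Equiv.subtypeEquivRight fun θ =>
      and_iff_right_of_imp fun h => surjective_of_map_ne_one hM θ (h ⟨0, hk⟩)
  have hker := card_surjectiveHom_eq_card_normal_mul hM
    (G := PresentedGroup (sigRels γ k p)) fun N => ∀ i : Fin k, PresentedGroup.of (Sum.inr i) ∉ N
  simp only [MonoidHom.mem_ker] at hker
  have hexp : ∀ x : Multiplicative (ZMod p), x ^ p = 1 := fun x => by
    rw [← pow_card_eq_one' (G := Multiplicative (ZMod p)) (x := x), hM]
  have hcount := card_sigRelsHom_of_ne_one (γ := γ) (k := k) hexp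
  rw [hM] at hcount
  obtain ⟨m, rfl⟩ : ∃ m, k = m + 1 := ⟨k - 1, by omega⟩
  rw [hsurj] at hker ⊢
  replace hker := congrArg (Nat.cast : ℕ → ℤ) hker
  push_cast [Nat.cast_sub hp.one_lt.le] at hker
  rw [Nat.add_sub_cancel]
  constructor
  · apply mul_left_cancel₀ (sub_ne_zero.2 (by exact_mod_cast hp.one_lt.ne') : (p : ℤ) - 1 ≠ 0)
    linear_combination hcount - p * hker
  · linear_combination hcount
end

section
/- Let p be an odd prime and r a divisor of p − 1, and let G_{p,r} = ⟨a, b | a^p = b^r = 1, b a b⁻¹ = a^ω⟩ where ω is an integer whose residue is a primitive r-th root of unity modulo p. Then the number of conjugacy classes of G_{p,r} equals r + (p − 1)/r. -/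
/-!
Write the elements of `K ⋊ ZMod r` as pairs `(x, k)`. Conjugating `(x, k)` by `(y, h)` gives
`(ω ^ h * x + (1 - ω ^ k) * y, k)`. For `k ≠ 0` the factor `1 - ω ^ k` is invertible, so all
`(x, k)` are conjugate: `r - 1` classes. For `k = 0` the classes are the orbits of `⟨ω⟩` on `K`,
namely `{0}` and the `(|K| - 1) / r` cosets of `⟨ω⟩` in `Kˣ`.
-/

open Multiplicative SemidirectProduct

section OrbitClass

variable {K : Type*} [CommGroupWithZero K] (ω : Kˣ)

open Classical in
noncomputable def orbitClass (x : K) : Option (Kˣ ⧸ Subgroup.zpowers ω) :=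
  if hx : x = 0 then none else some (Units.mk0 x hx)

variable {ω}

theorem orbitClass_eq_iff (hω : IsOfFinOrder ω) {x y : K} :
    orbitClass ω x = orbitClass ω y ↔ ∃ j : ℕ, y = ω ^ j * x := by
  by_cases hx : x = 0 <;> by_cases hy : y = 0
  · simp [hx, hy]
  · simp [orbitClass, hx, hy]
  · simp [orbitClass, hx, hy]
  · simp only [orbitClass, hx, hy, dite_false, Option.some.injEq, QuotientGroup.eq,
      ← hω.mem_powers_iff_mem_zpowers, Submonoid.mem_powers_iff, eq_inv_mul_iff_mul_eq,
      Units.ext_iff, Units.val_mul, Units.val_pow_eq_pow_val, Units.val_mk0, eq_comm (a := y),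
      mul_comm x]

theorem orbitClass_surjective : Function.Surjective (orbitClass ω) := by
  rintro (_ | q)
  · exact ⟨0, by simp [orbitClass]⟩
  · obtain ⟨u, rfl⟩ := QuotientGroup.mk_surjective q
    exact ⟨u, by simp [orbitClass]⟩

end OrbitClass

open Classical in
noncomputable def conjInvariant {K : Type*} [Field K] {r : ℕ} (ω : Kˣ)
    {φ : Multiplicative (ZMod r) →* MulAut (Multiplicative K)}
    (g : Multiplicative K ⋊[φ] Multiplicative (ZMod r)) :
    Option (Kˣ ⧸ Subgroup.zpowers ω) ⊕ {k : Multiplicative (ZMod r) // k ≠ 1} :=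
  if h : g.right = 1 then .inl (orbitClass ω (toAdd g.left)) else .inr ⟨g.right, h⟩

theorem SemidirectProduct.conj_right {N H : Type*} [Group N] [CommGroup H] {φ : H →* MulAut N}
    (g x : N ⋊[φ] H) : (g * x * g⁻¹).right = x.right := by
  simp [mul_inv_cancel_comm]

section Metacyclic

variable {K : Type*} [Field K] {r : ℕ} {ω : Kˣ}
  {φ : Multiplicative (ZMod r) →* MulAut (Multiplicative K)}
  (hφ : ∀ x : K, φ (ofAdd 1) (ofAdd x) = ofAdd ((ω : K) * x))

include hφ

theorem toAdd_generator_pow_apply (n : ℕ) (x : K) :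
    toAdd ((φ (ofAdd 1) ^ n) (ofAdd x)) = (ω : K) ^ n * x := by
  induction n generalizing x with
  | zero => simp
  | succ n ih => rw [pow_succ, MulAut.mul_apply, hφ, ih, pow_succ, mul_assoc]

theorem toAdd_map_apply [NeZero r] (k : Multiplicative (ZMod r)) (x : Multiplicative K) :
    toAdd (φ k x) = (ω : K) ^ (toAdd k).val * toAdd x := by
  have hk : k = ofAdd 1 ^ (toAdd k).val := by
    rw [← ofAdd_nsmul, nsmul_one, ZMod.natCast_zmod_val, ofAdd_toAdd]
  conv_lhs => rw [hk, map_pow]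
  exact toAdd_generator_pow_apply hφ _ x

theorem toAdd_conj_left [NeZero r] (g x : Multiplicative K ⋊[φ] Multiplicative (ZMod r)) :
    toAdd (g * x * g⁻¹).left = (ω : K) ^ (toAdd g.right).val * toAdd x.left
      + (1 - (ω : K) ^ (toAdd x.right).val) * toAdd g.left := by
  have hcomm : φ (g.right * x.right) (φ g.right⁻¹ g.left⁻¹) = φ x.right g.left⁻¹ := by
    rw [← MulAut.mul_apply, ← map_mul, mul_inv_cancel_comm]
  simp only [mul_left, mul_right, inv_left, hcomm, toAdd_mul, toAdd_map_apply hφ, toAdd_inv]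
  ring

omit hφ in
theorem one_sub_pow_val_ne_zero [NeZero r] (hω : orderOf ω = r) {k : ZMod r} (hk : k ≠ 0) :
    1 - (ω : K) ^ k.val ≠ 0 := by
  rw [sub_ne_zero, ne_comm, ← Units.val_pow_eq_pow_val, Ne, Units.val_eq_one]
  intro hpow
  have hdvd := orderOf_dvd_of_pow_eq_one hpow
  rw [hω] at hdvd
  exact hk ((ZMod.val_eq_zero k).mp (Nat.eq_zero_of_dvd_of_lt hdvd (ZMod.val_lt k)))

theorem isConj_iff_right_eq_and [NeZero r] (hω : orderOf ω = r)
    {x y : Multiplicative K ⋊[φ] Multiplicative (ZMod r)} :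
    IsConj x y ↔ x.right = y.right ∧
      (x.right = 1 → ∃ j : ℕ, toAdd y.left = (ω : K) ^ j * toAdd x.left) := by
  rw [isConj_iff]
  constructor
  · rintro ⟨c, rfl⟩
    refine ⟨(conj_right c x).symm, fun hx => ⟨(toAdd c.right).val, ?_⟩⟩
    rw [toAdd_conj_left hφ, hx]
    simp
  · rintro ⟨hright, hleft⟩
    by_cases hx : x.right = 1
    · obtain ⟨j, hj⟩ := hleft hx
      have hpow : (ω : K) ^ (j : ZMod r).val = (ω : K) ^ j := by
        rw [ZMod.val_natCast, ← hω, ← Units.val_pow_eq_pow_val, pow_mod_orderOf,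
          Units.val_pow_eq_pow_val]
      refine ⟨inr (ofAdd (j : ZMod r)),
        SemidirectProduct.ext (toAdd.injective ?_) (by rw [conj_right, hright])⟩
      rw [toAdd_conj_left hφ, hx, right_inr, toAdd_ofAdd, hpow, hj]
      simp
    · have hne := one_sub_pow_val_ne_zero hω (k := toAdd x.right) hx
      refine ⟨inl (ofAdd ((1 - (ω : K) ^ (toAdd x.right).val)⁻¹ * (toAdd y.left - toAdd x.left))),
        SemidirectProduct.ext (toAdd.injective ?_) (by rw [conj_right, hright])⟩
      rw [toAdd_conj_left hφ]
      simp [mul_inv_cancel_left₀ hne]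

theorem conjInvariant_eq_iff_isConj [NeZero r] (hω : orderOf ω = r)
    {x y : Multiplicative K ⋊[φ] Multiplicative (ZMod r)} :
    conjInvariant ω x = conjInvariant ω y ↔ IsConj x y := by
  have hfin : IsOfFinOrder ω := orderOf_pos_iff.mp (hω ▸ NeZero.pos r)
  rw [isConj_iff_right_eq_and hφ hω]
  by_cases hx : x.right = 1 <;> by_cases hy : y.right = 1 <;>
    simp [conjInvariant, hx, hy, orbitClass_eq_iff hfin,
      eq_comm (a := (1 : Multiplicative (ZMod r)))]

omit hφ in
theorem conjInvariant_surjective : Function.Surjective (conjInvariant ω (φ := φ)) := by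
  rintro (o | ⟨k, hk⟩)
  · obtain ⟨x, rfl⟩ := orbitClass_surjective o
    exact ⟨inl (ofAdd x), by simp [conjInvariant]⟩
  · exact ⟨inr k, by simp [conjInvariant, hk]⟩

noncomputable def conjClassesEquiv [NeZero r] (hω : orderOf ω = r) :
    ConjClasses (Multiplicative K ⋊[φ] Multiplicative (ZMod r)) ≃
      Option (Kˣ ⧸ Subgroup.zpowers ω) ⊕ {k : Multiplicative (ZMod r) // k ≠ 1} :=
  (Quotient.congrRight fun _ _ => (conjInvariant_eq_iff_isConj hφ hω).symm).trans
    (Setoid.quotientKerEquivOfSurjective _ conjInvariant_surjective)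

theorem card_conjClasses [Finite K] (hω : orderOf ω = r) :
    Nat.card (ConjClasses (Multiplicative K ⋊[φ] Multiplicative (ZMod r)))
      = r + (Nat.card K - 1) / r := by
  have hr : 0 < r := hω ▸ orderOf_pos ω
  have : NeZero r := ⟨hr.ne'⟩
  have hindex : (Subgroup.zpowers ω).index = (Nat.card K - 1) / r := by
    rw [← Nat.card_units, ← (Subgroup.zpowers ω).index_mul_card, Nat.card_zpowers, hω,
      Nat.mul_div_cancel _ hr]
  have hcompl : Nat.card {k : Multiplicative (ZMod r) // k ≠ 1} = r - 1 := by
    rw [Nat.card_eq_fintype_card, Fintype.card_subtype_compl, Fintype.card_subtype_eq]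
    simp
  rw [Nat.card_congr (conjClassesEquiv hφ hω), Nat.card_sum, Finite.card_option,
    ← Subgroup.index_eq_card, hindex, hcompl]
  omega

end Metacyclic

theorem stmt_11_general (p r : ℕ) (hp : p.Prime)
    (ω : (ZMod p)ˣ) (hω : orderOf ω = r)
    (φ : Multiplicative (ZMod r) →* MulAut (Multiplicative (ZMod p)))
    (hφ : ∀ x : ZMod p,
      (φ (Multiplicative.ofAdd (1 : ZMod r))) (Multiplicative.ofAdd x)
        = Multiplicative.ofAdd ((ω : ZMod p) * x)) :
    Nat.card (ConjClasses (Multiplicative (ZMod p) ⋊[φ] Multiplicative (ZMod r)))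
      = r + (p - 1) / r := by
  have : Fact p.Prime := ⟨hp⟩
  rw [card_conjClasses hφ hω, Nat.card_zmod]

/-- The group `G_{p,r} = (ZMod p) ⋊ (ZMod r)`, where the generator of `ZMod r` acts on the
additive group `ZMod p` by multiplication by a unit `ω` of multiplicative order `r`, has
exactly `r + (p − 1)/r` conjugacy classes. -/
theorem stmt_11 (p r : ℕ) (hp : p.Prime) (hodd : Odd p) (hr : r ∣ p - 1)
    (ω : (ZMod p)ˣ) (hω : orderOf ω = r)
    (φ : Multiplicative (ZMod r) →* MulAut (Multiplicative (ZMod p)))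
    (hφ : ∀ x : ZMod p,
      (φ (Multiplicative.ofAdd (1 : ZMod r))) (Multiplicative.ofAdd x)
        = Multiplicative.ofAdd ((ω : ZMod p) * x)) :
    Nat.card (ConjClasses (Multiplicative (ZMod p) ⋊[φ] Multiplicative (ZMod r)))
      = r + (p - 1) / r :=
  stmt_11_general p r hp ω hω φ hφ
end

section
/- Let p be an odd prime and let AGL₁(p) denote the group of affine transformations x ↦ c·x + d (c ∈ (ZMod p)ˣ, d ∈ ZMod p) of ZMod p, i.e. the semidirect product (ZMod p) ⋊ (ZMod p)ˣ with the natural multiplication action. Then for every divisor r of p − 1, AGL₁(p) has exactly one subgroup of order p·r; that is, any two subgroups of AGL₁(p) of order p·r are equal. -/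
/-!
The kernel `N` of the projection `AGL₁(p) → (ZMod p)ˣ` has order `p`, coprime to its index
`p - 1`. Counting orders in `H ⊓ N` shows that every subgroup `H` of order `p·r` contains `N`,
so `H` is the preimage of its image, a subgroup of order `r` of the cyclic group `(ZMod p)ˣ`;
in a cyclic group that subgroup is unique (it is the kernel of `x ↦ x ^ r`).
-/

namespace Subgroup

variable {G Q : Type*} [Group G] [CommGroup Q]

lemma card_inf_mul_relIndex (N H : Subgroup G) :
    Nat.card (N ⊓ H : Subgroup G) * N.relIndex H = Nat.card H := by
  rw [← inf_relIndex_right N H, ← relIndex_bot_left, ← relIndex_bot_left,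
    relIndex_mul_relIndex _ _ _ bot_le inf_le_right]

lemma le_of_coprime_index_of_card_dvd [Finite G] {N H : Subgroup G} [N.Normal]
    (hN : (Nat.card N).Coprime N.index) (hH : Nat.card N ∣ Nat.card H) : N ≤ H := by
  have hdvd : Nat.card N ∣ Nat.card (N ⊓ H : Subgroup G) :=
    (hN.coprime_dvd_right (relIndex_dvd_index_of_normal N H)).dvd_of_dvd_mul_right
      ((card_inf_mul_relIndex N H).symm ▸ hH)
  exact inf_eq_left.mp <| eq_of_le_of_card_ge inf_le_left (Nat.le_of_dvd Nat.card_pos hdvd)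

lemma card_comap_of_surjective [Finite G] {f : G →* Q} (hf : Function.Surjective f)
    (K : Subgroup Q) : Nat.card (K.comap f) = Nat.card f.ker * Nat.card K := by
  rw [← card_inf_mul_relIndex f.ker, relIndex_ker, map_comap_eq_self_of_surjective hf,
    inf_eq_left.mpr (ker_le_comap f K)]

lemma _root_.IsCyclic.eq_ker_powMonoidHom_card [IsCyclic Q] [Finite Q] (K : Subgroup Q) :
    K = (powMonoidHom (Nat.card K)).ker := by
  refine eq_of_le_of_card_ge (fun x hx => ?_) ?_
  · rw [MonoidHom.mem_ker, powMonoidHom_apply]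
    exact congrArg Subtype.val (pow_card_eq_one' (x := (⟨x, hx⟩ : K)))
  · rw [IsCyclic.card_powMonoidHom_ker, Nat.gcd_eq_right (card_subgroup_dvd_card K)]

theorem existsUnique_card_eq_card_ker_mul [Finite G] [IsCyclic Q] {f : G →* Q}
    (hf : Function.Surjective f) (hcop : (Nat.card f.ker).Coprime (Nat.card Q)) {r : ℕ}
    (hr : r ∣ Nat.card Q) : ∃! H : Subgroup G, Nat.card H = Nat.card f.ker * r := by
  have : Finite Q := Finite.of_surjective f hf
  have hN : (Nat.card f.ker).Coprime f.ker.index := by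
    rwa [index_ker, f.range_eq_top_of_surjective hf, card_top]
  refine ⟨(powMonoidHom r).ker.comap f, ?_, fun H hH => ?_⟩
  · show Nat.card _ = _
    rw [card_comap_of_surjective hf, IsCyclic.card_powMonoidHom_ker, Nat.gcd_eq_right hr]
  have hle : f.ker ≤ H := le_of_coprime_index_of_card_dvd hN (hH ▸ dvd_mul_right _ _)
  have hmap : Nat.card (H.map f) = r := by
    have h := card_comap_of_surjective hf (H.map f)
    rw [comap_map_eq_self hle, hH] at h
    exact (Nat.eq_of_mul_eq_mul_left Nat.card_pos h).symm
  rw [← comap_map_eq_self hle, IsCyclic.eq_ker_powMonoidHom_card (H.map f), hmap]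

end Subgroup

theorem stmt_14_general (p : ℕ) (hp : p.Prime)
    (φ : (ZMod p)ˣ →* MulAut (Multiplicative (ZMod p)))
    (r : ℕ) (hr : r ∣ p - 1) :
    ∃! H : Subgroup (Multiplicative (ZMod p) ⋊[φ] (ZMod p)ˣ), Nat.card H = p * r := by
  have : Fact p.Prime := ⟨hp⟩
  have : Finite (Multiplicative (ZMod p) ⋊[φ] (ZMod p)ˣ) :=
    Finite.of_equiv _ SemidirectProduct.equivProd.symm
  have hQ : Nat.card (ZMod p)ˣ = p - 1 := by
    rw [Nat.card_eq_fintype_card, ZMod.card_units_eq_totient, Nat.totient_prime hp]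
  have hN : Nat.card (SemidirectProduct.rightHom (φ := φ)).ker = p := by
    rw [← SemidirectProduct.range_inl_eq_ker_rightHom,
      Nat.card_congr (MonoidHom.ofInjective SemidirectProduct.inl_injective).toEquiv.symm,
      Nat.card_congr Multiplicative.toAdd, Nat.card_zmod]
  have hcop : p.Coprime (p - 1) := (Nat.coprime_self_sub_right hp.one_le).mpr p.coprime_one_right
  have hunique := Subgroup.existsUnique_card_eq_card_ker_mul SemidirectProduct.rightHom_surjective
    (by rwa [hN, hQ]) (hQ ▸ hr)
  rwa [hN] at hunique

/-- The affine group `AGL₁(p) = (ZMod p) ⋊ (ZMod p)ˣ` (with the natural multiplication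
action) has exactly one subgroup of order `p·r` for each divisor `r` of `p − 1`. -/
theorem stmt_14 (p : ℕ) (hp : p.Prime) (hodd : Odd p)
    (φ : (ZMod p)ˣ →* MulAut (Multiplicative (ZMod p)))
    (hφ : ∀ (c : (ZMod p)ˣ) (x : ZMod p),
      (φ c) (Multiplicative.ofAdd x) = Multiplicative.ofAdd ((c : ZMod p) * x))
    (r : ℕ) (hr : r ∣ p - 1) :
    ∃! H : Subgroup (Multiplicative (ZMod p) ⋊[φ] (ZMod p)ˣ), Nat.card H = p * r :=
  stmt_14_general p hp φ r hr
end

section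
/- Let p be a prime with p ≡ 1 (mod 3), and let G = G_{p,6} × C₂, a group of order 12p. Then G contains elements x of order 2 and y of order 6 such that the product x·y has order 6 and x and y together generate G. (This exhibits G as a quotient of the von Dyck triangle group of type (2,6,6), as required for the chiral maps of type {6,6} and genus p + 1 in the paper's classification.) -/
/-!
Write `a = ofAdd 1 ∈ ZMod p`, `b = ofAdd 1 ∈ C₆` (acting by `ω`) and `c` for the generator of `C₂`,
and take `x = (b³, c)`, `y = (a b, 1)`. If `ωᵏ ≠ 1`, every element `(t, bᵏ)` is conjugate to `bᵏ`
by a translation, so it has the order of `bᵏ`; this gives the orders `2`, `6` and `lcm 3 2 = 6`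
of `x`, `y` and `x y`. Since `b³` acts by `ω³ ≠ 1`, `x y x y⁻¹` is a nontrivial translation, so
`⟨x, y⟩` contains the normal subgroup `ZMod p` of prime order, and `x`, `y` map onto generators of
the quotient `C₆ × C₂`.
-/

open Multiplicative

namespace SemidirectProduct

variable {F G : Type*} [Field F] [Group G] {φ : G →* MulAut (Multiplicative F)}

theorem orderOf_mk_of_smul_ne_one {g : G} {c : F}
    (hg : ∀ t : F, φ g (ofAdd t) = ofAdd (c * t)) (hc : c ≠ 1) (n : Multiplicative F) :
    orderOf (⟨n, g⟩ : Multiplicative F ⋊[φ] G) = orderOf g := by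
  set s : F := toAdd n / (1 - c)
  have hs : s = toAdd n + c * s := by
    simp only [s]
    field_simp [sub_ne_zero.mpr hc.symm]
    ring
  have hconj : SemiconjBy (inl (ofAdd s)) (inr g) (⟨n, g⟩ : Multiplicative F ⋊[φ] G) := by
    ext : 1
    · simp only [mul_left, left_inl, right_inl, left_inr, map_one, mul_one, hg]
      exact congrArg ofAdd hs
    · simp
  rw [← hconj.orderOf_eq, orderOf_injective inr inr_injective]

end SemidirectProduct

theorem map_ofAdd_natCast_apply {n : ℕ} {R : Type*} [Semiring R]
    {φ : Multiplicative (ZMod n) →* MulAut (Multiplicative R)} {u : R}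
    (hφ : ∀ t : R, φ (ofAdd 1) (ofAdd t) = ofAdd (u * t)) (k : ℕ) (t : R) :
    φ (ofAdd (k : ZMod n)) (ofAdd t) = ofAdd (u ^ k * t) := by
  induction k generalizing t with
  | zero => simp
  | succ k ih =>
    rw [Nat.cast_succ, add_comm, ofAdd_add, map_mul, MulAut.mul_apply, ih, hφ, pow_succ',
      mul_assoc]

theorem orderOf_ofAdd_natCast {n : ℕ} [NeZero n] (k : ℕ) :
    orderOf (ofAdd (k : ZMod n)) = n / n.gcd k := by
  rw [orderOf_ofAdd_eq_addOrderOf, ZMod.addOrderOf_coe _ (NeZero.ne n)]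

theorem Units.val_pow_ne_one_of_lt_orderOf {M : Type*} [Monoid M] {u : Mˣ} {k : ℕ}
    (hk0 : k ≠ 0) (hk : k < orderOf u) : (u : M) ^ k ≠ 1 := by
  rw [← Units.val_pow_eq_pow_val, Ne, Units.val_eq_one]
  exact pow_ne_one_of_lt_orderOf hk0 hk

theorem Subgroup.eq_top_of_map_eq_top_of_ker_le {G Q : Type*} [Group G] [Group Q]
    {f : G →* Q} {H : Subgroup G} (hmap : H.map f = ⊤) (hker : f.ker ≤ H) : H = ⊤ := by
  rw [← Subgroup.comap_map_eq_self hker, hmap, Subgroup.comap_top]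

theorem closure_ofAdd_pair_eq_top :
    Subgroup.closure {((ofAdd 3, ofAdd 1) : Multiplicative (ZMod 6) × Multiplicative (ZMod 2)),
      (ofAdd 1, 1)} = ⊤ := by
  have hwords : ∀ g : Multiplicative (ZMod 6) × Multiplicative (ZMod 2), ∃ i : Fin 6, ∃ j : Fin 2,
      ((ofAdd 1, 1) : Multiplicative (ZMod 6) × Multiplicative (ZMod 2)) ^ (i : ℕ) *
        (ofAdd 3, ofAdd 1) ^ (j : ℕ) = g := by
    decide
  rw [Subgroup.eq_top_iff']
  intro g
  obtain ⟨i, j, rfl⟩ := hwords g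
  exact mul_mem (pow_mem (Subgroup.subset_closure (by simp)) _)
    (pow_mem (Subgroup.subset_closure (by simp)) _)

section DyckGenerators

variable {p : ℕ} (φ : Multiplicative (ZMod 6) →* MulAut (Multiplicative (ZMod p)))

def dyckX : (Multiplicative (ZMod p) ⋊[φ] Multiplicative (ZMod 6)) × Multiplicative (ZMod 2) :=
  (SemidirectProduct.inr (ofAdd 3), ofAdd 1)

def dyckY : (Multiplicative (ZMod p) ⋊[φ] Multiplicative (ZMod 6)) × Multiplicative (ZMod 2) :=
  (⟨ofAdd 1, ofAdd 1⟩, 1)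

theorem orderOf_dyckX : orderOf (dyckX φ) = 2 := by
  rw [Prod.orderOf, dyckX, orderOf_injective _ SemidirectProduct.inr_injective]
  have h3 : orderOf (ofAdd (3 : ZMod 6)) = 2 := by simpa using orderOf_ofAdd_natCast (n := 6) 3
  simp [h3]

variable {φ} {ω : (ZMod p)ˣ}
  (hφ : ∀ x : ZMod p, φ (ofAdd 1) (ofAdd x) = ofAdd ((ω : ZMod p) * x))
include hφ

theorem dyckX_mul_dyckY_mul_dyckX :
    dyckX φ * dyckY φ * dyckX φ =
      (SemidirectProduct.inl (ofAdd ((ω : ZMod p) ^ 3 - 1)), 1) * dyckY φ := by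
  have h3 := map_ofAdd_natCast_apply hφ 3
  simp only [Nat.cast_ofNat] at h3
  ext : 1
  · ext : 1
    · show 1 * φ (ofAdd 3) (ofAdd 1) * φ (ofAdd 3 * ofAdd 1) 1 =
        ofAdd ((ω : ZMod p) ^ 3 - 1) * φ 1 (ofAdd 1)
      rw [h3, map_one, map_one, MulAut.one_apply, mul_one, one_mul, ← ofAdd_add, mul_one,
        sub_add_cancel]
    · show ofAdd (3 : ZMod 6) * ofAdd 1 * ofAdd 3 = 1 * ofAdd 1
      rfl
  · show ofAdd (1 : ZMod 2) * 1 * ofAdd 1 = 1 * 1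
    rfl

variable [Fact p.Prime] (hω : orderOf ω = 6)
include hω

theorem orderOf_dyckY : orderOf (dyckY φ) = 6 := by
  rw [Prod.orderOf, dyckY, orderOf_one, Nat.lcm_one_right,
    SemidirectProduct.orderOf_mk_of_smul_ne_one hφ
      (by simpa using ω.val_pow_ne_one_of_lt_orderOf one_ne_zero (by omega))]
  simp

theorem orderOf_dyckX_mul_dyckY : orderOf (dyckX φ * dyckY φ) = 6 := by
  have hxy : dyckX φ * dyckY φ =
      (⟨(dyckX φ * dyckY φ).1.left, ofAdd ((4 : ℕ) : ZMod 6)⟩, ofAdd 1) := rfl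
  rw [hxy, Prod.orderOf, SemidirectProduct.orderOf_mk_of_smul_ne_one (map_ofAdd_natCast_apply hφ 4)
      (ω.val_pow_ne_one_of_lt_orderOf four_ne_zero (by omega)), orderOf_ofAdd_natCast]
  norm_num [Nat.lcm]

theorem inl_mem_closure_dyckX_dyckY (a : Multiplicative (ZMod p)) :
    (SemidirectProduct.inl a, 1) ∈ Subgroup.closure {dyckX φ, dyckY φ} := by
  set ι := (MonoidHom.inl _ (Multiplicative (ZMod 2))).comp (SemidirectProduct.inl (φ := φ))
  set b : Multiplicative (ZMod p) := ofAdd ((ω : ZMod p) ^ 3 - 1)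
  have hb : b ≠ 1 := sub_ne_zero.mpr (ω.val_pow_ne_one_of_lt_orderOf three_ne_zero (by omega))
  have hbH : ι b ∈ Subgroup.closure {dyckX φ, dyckY φ} := by
    have hx : dyckX φ ∈ Subgroup.closure {dyckX φ, dyckY φ} := Subgroup.subset_closure (by simp)
    have hy : dyckY φ ∈ Subgroup.closure {dyckX φ, dyckY φ} := Subgroup.subset_closure (by simp)
    rw [show ι b = dyckX φ * dyckY φ * dyckX φ * (dyckY φ)⁻¹ from
      eq_mul_inv_of_mul_eq (dyckX_mul_dyckY_mul_dyckX hφ).symm]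
    exact mul_mem (mul_mem (mul_mem hx hy) hx) (inv_mem hy)
  have hcard : Nat.card (Multiplicative (ZMod p)) = p := by
    simp [Nat.card_eq_fintype_card]
  obtain ⟨k, rfl⟩ := Subgroup.mem_zpowers_iff.mp (mem_zpowers_of_prime_card hcard (g' := a) hb)
  simpa [ι] using zpow_mem hbH k

theorem closure_dyckX_dyckY : Subgroup.closure {dyckX φ, dyckY φ} = ⊤ := by
  refine Subgroup.eq_top_of_map_eq_top_of_ker_le
    (f := SemidirectProduct.rightHom.prodMap (MonoidHom.id _)) ?_ ?_
  · rw [MonoidHom.map_closure, Set.image_pair]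
    exact closure_ofAdd_pair_eq_top
  · rintro ⟨⟨a, k⟩, m⟩ hg
    obtain ⟨rfl, rfl⟩ : k = 1 ∧ m = 1 := by simpa using hg
    exact inl_mem_closure_dyckX_dyckY hφ hω a

end DyckGenerators

theorem stmt_18_general (p : ℕ) (hp : p.Prime)
    (ω : (ZMod p)ˣ) (hω : orderOf ω = 6)
    (φ : Multiplicative (ZMod 6) →* MulAut (Multiplicative (ZMod p)))
    (hφ : ∀ x : ZMod p,
      (φ (Multiplicative.ofAdd (1 : ZMod 6))) (Multiplicative.ofAdd x)
        = Multiplicative.ofAdd ((ω : ZMod p) * x)) :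
    ∃ x y : (Multiplicative (ZMod p) ⋊[φ] Multiplicative (ZMod 6)) × Multiplicative (ZMod 2),
      orderOf x = 2 ∧ orderOf y = 6 ∧ orderOf (x * y) = 6 ∧
        Subgroup.closure {x, y} = ⊤ := by
  have : Fact p.Prime := ⟨hp⟩
  exact ⟨dyckX φ, dyckY φ, orderOf_dyckX φ, orderOf_dyckY hφ hω, orderOf_dyckX_mul_dyckY hφ hω,
    closure_dyckX_dyckY hφ hω⟩

/-- For a prime `p ≡ 1 (mod 3)`, the group `G = G_{p,6} × C₂` of order `12p` contains an
element `x` of order `2` and an element `y` of order `6` such that `x·y` has order `6` and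
`x`, `y` generate `G`: i.e. `G` is a quotient of the von Dyck triangle group of type
`(2,6,6)`, as required for the chiral maps of type `{6,6}` and genus `p + 1`. -/
theorem stmt_18 (p : ℕ) (hp : p.Prime) (h3 : p % 3 = 1)
    (ω : (ZMod p)ˣ) (hω : orderOf ω = 6)
    (φ : Multiplicative (ZMod 6) →* MulAut (Multiplicative (ZMod p)))
    (hφ : ∀ x : ZMod p,
      (φ (Multiplicative.ofAdd (1 : ZMod 6))) (Multiplicative.ofAdd x)
        = Multiplicative.ofAdd ((ω : ZMod p) * x)) :
    ∃ x y : (Multiplicative (ZMod p) ⋊[φ] Multiplicative (ZMod 6)) × Multiplicative (ZMod 2),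
      orderOf x = 2 ∧ orderOf y = 6 ∧ orderOf (x * y) = 6 ∧
        Subgroup.closure {x, y} = ⊤ :=
  stmt_18_general p hp ω hω φ hφ
end

section
/- Let p be a prime with p ≡ 1 (mod 5), and let G = G_{p,10}, a group of order 10p. Then G contains elements x of order 2 and y of order 5 such that the product x·y has order 10 and x and y together generate G. (This exhibits G as a quotient of the von Dyck triangle group of type (2,5,10), as required for the chiral maps of type {5,10} and genus p + 1 in the paper's classification.) -/
/-!
Put `c = ω`, `x = (1, 5)` and `y = (0, 6)`, so that `x * y = (1, 1)`. An element `(a, k)` with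
`c ^ k ≠ 1` has the same order as `k` in `ZMod 10`: its power with trivial `ZMod 10` component is a
fixed point of multiplication by `c ^ k`, hence trivial. This gives the orders `2`, `5`, `10`.
Since `c ^ 6 ≠ 1`, `x` and `y` do not commute, so their commutator is a nontrivial element of the
normal subgroup `ZMod p`, which it generates as `p` is prime; and `x * y` maps onto the generator
of `ZMod 10`. Hence `x` and `y` generate `G`.
-/

open SemidirectProduct Multiplicative
open scoped commutatorElement

namespace SemidirectProduct

variable {N G : Type*}

-- `g ^ orderOf g.right` lies in `N` and commutes with `g`, so it is a fixed point of `φ g.right`.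
theorem orderOf_eq_orderOf_right [CommGroup N] [Group G] {φ : G →* MulAut N} (g : N ⋊[φ] G)
    (hfix : ∀ n : N, φ g.right n = n → n = 1) : orderOf g = orderOf g.right := by
  refine (orderOf_dvd_of_pow_eq_one ?_).antisymm (orderOf_map_dvd rightHom g)
  set k := orderOf g.right
  have hright : (g ^ k).right = 1 := by
    rw [← rightHom_eq_right, map_pow]
    exact pow_orderOf_eq_one g.right
  have hcomm : g.left * φ g.right (g ^ k).left = (g ^ k).left * g.left := by
    simpa [mul_left, hright] using congrArg left (Commute.self_pow g k).eq
  have hleft : (g ^ k).left = 1 :=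
    hfix _ (mul_left_cancel (hcomm.trans (mul_comm _ _)))
  exact SemidirectProduct.ext hleft hright

theorem eq_top_of_range_inl_le [Group N] [Group G] {φ : G →* MulAut N}
    {H : Subgroup (N ⋊[φ] G)} (hN : inl.range ≤ H)
    (hG : ∀ g : G, ∃ h ∈ H, h.right = g) : H = ⊤ := by
  refine eq_top_iff.mpr fun g _ => ?_
  obtain ⟨h, hH, hgh⟩ := hG g.right
  have hker : g * h⁻¹ ∈ inl.range := by
    rw [range_inl_eq_ker_rightHom, MonoidHom.mem_ker, map_mul, map_inv, rightHom_eq_right, hgh,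
      mul_inv_cancel]
  simpa using H.mul_mem (hN hker) hH

-- Over an abelian `G` commutators lie in `N`, and a nontrivial one generates `N` when `|N|` is prime.
theorem range_inl_le_of_not_commute [Group N] [CommGroup G] {φ : G →* MulAut N}
    (hN : (Nat.card N).Prime)
    {H : Subgroup (N ⋊[φ] G)} {x y : N ⋊[φ] G} (hx : x ∈ H) (hy : y ∈ H)
    (hxy : ¬Commute x y) : inl.range ≤ H := by
  have := Fact.mk hN
  obtain ⟨n, hn⟩ : ⁅x, y⁆ ∈ (inl : N →* N ⋊[φ] G).range := by
    rw [range_inl_eq_ker_rightHom, MonoidHom.mem_ker, map_commutatorElement,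
      commutatorElement_eq_one_iff_commute]
    exact Commute.all _ _
  have hn1 : n ≠ 1 := by
    rintro rfl
    exact hxy (commutatorElement_eq_one_iff_commute.mp (by simpa using hn.symm))
  have htop : H.comap inl = ⊤ := by
    refine (H.comap inl).eq_bot_or_eq_top_of_prime_card.resolve_left fun hbot => hn1 ?_
    rw [← Subgroup.mem_bot, ← hbot, Subgroup.mem_comap, hn, commutatorElement_def]
    exact H.mul_mem (H.mul_mem (H.mul_mem hx hy) (H.inv_mem hx)) (H.inv_mem hy)
  rintro _ ⟨m, rfl⟩
  exact Subgroup.mem_comap.mp (htop ▸ Subgroup.mem_top m)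

theorem eq_top_of_not_commute [Group N] [CommGroup G] {φ : G →* MulAut N}
    (hN : (Nat.card N).Prime)
    {H : Subgroup (N ⋊[φ] G)} {x y : N ⋊[φ] G} (hx : x ∈ H) (hy : y ∈ H)
    (hxy : ¬Commute x y) (hG : ∀ g : G, ∃ h ∈ H, h.right = g) : H = ⊤ :=
  eq_top_of_range_inl_le (range_inl_le_of_not_commute hN hx hy hxy) hG

theorem closure_pair_eq_top_of_not_commute [Group N] {m : ℕ} [NeZero m]
    {φ : Multiplicative (ZMod m) →* MulAut N} (hN : (Nat.card N).Prime)
    {x y : N ⋊[φ] Multiplicative (ZMod m)} (hxy : ¬Commute x y) (hgen : (x * y).right = ofAdd 1) :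
    Subgroup.closure {x, y} = ⊤ := by
  have hx : x ∈ Subgroup.closure {x, y} := Subgroup.subset_closure (Set.mem_insert _ _)
  have hy : y ∈ Subgroup.closure {x, y} := Subgroup.subset_closure (Set.mem_insert_of_mem _ rfl)
  refine eq_top_of_not_commute hN hx hy hxy fun g => ⟨(x * y) ^ (toAdd g).val, ?_, ?_⟩
  · exact pow_mem (mul_mem hx hy) _
  · rw [← rightHom_eq_right, map_pow, rightHom_eq_right, hgen, ← ofAdd_nsmul, nsmul_one,
      ZMod.natCast_zmod_val, ofAdd_toAdd]

end SemidirectProduct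

section AffineAction

variable {K : Type*} [CommRing K] {m : ℕ} [NeZero m] {c : K}
  {φ : Multiplicative (ZMod m) →* MulAut (Multiplicative K)}

theorem apply_ofAdd_of_apply_ofAdd_one (hφ : ∀ a : K, φ (ofAdd 1) (ofAdd a) = ofAdd (c * a))
    (k : ZMod m) (a : K) : φ (ofAdd k) (ofAdd a) = ofAdd (c ^ k.val * a) := by
  have hpow : ∀ n : ℕ, φ (ofAdd 1 ^ n) (ofAdd a) = ofAdd (c ^ n * a) := by
    intro n
    induction n with
    | zero => simp
    | succ n ih => rw [pow_succ', map_mul, MulAut.mul_apply, ih, hφ, pow_succ', mul_assoc]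
  rw [← hpow, ← ofAdd_nsmul, nsmul_one, ZMod.natCast_zmod_val]

theorem mk_mul_mk_of_apply_ofAdd_one (hφ : ∀ a : K, φ (ofAdd 1) (ofAdd a) = ofAdd (c * a))
    (a b : K) (k l : ZMod m) :
    (⟨ofAdd a, ofAdd k⟩ * ⟨ofAdd b, ofAdd l⟩ : Multiplicative K ⋊[φ] Multiplicative (ZMod m)) =
      ⟨ofAdd (a + c ^ k.val * b), ofAdd (k + l)⟩ := by
  ext
  · rw [mul_left, apply_ofAdd_of_apply_ofAdd_one hφ, ← ofAdd_add]
  · rfl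

theorem orderOf_mk_of_apply_ofAdd_one [IsDomain K]
    (hφ : ∀ a : K, φ (ofAdd 1) (ofAdd a) = ofAdd (c * a)) (a : K) {k : ZMod m}
    (hk : c ^ k.val ≠ 1) :
    orderOf (⟨ofAdd a, ofAdd k⟩ : Multiplicative K ⋊[φ] Multiplicative (ZMod m)) =
      addOrderOf k := by
  rw [orderOf_eq_orderOf_right, orderOf_ofAdd_eq_addOrderOf]
  intro n hn
  rw [← ofAdd_toAdd n, apply_ofAdd_of_apply_ofAdd_one hφ, ofAdd.injective.eq_iff] at hn
  by_contra hn1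
  exact hk ((mul_eq_right₀ (fun h0 => hn1 (toAdd_eq_zero.mp h0))).mp hn)

end AffineAction

theorem stmt_19_general (p : ℕ) (hp : p.Prime)
    (ω : (ZMod p)ˣ) (hω : orderOf ω = 10)
    (φ : Multiplicative (ZMod 10) →* MulAut (Multiplicative (ZMod p)))
    (hφ : ∀ x : ZMod p,
      (φ (Multiplicative.ofAdd (1 : ZMod 10))) (Multiplicative.ofAdd x)
        = Multiplicative.ofAdd ((ω : ZMod p) * x)) :
    ∃ x y : Multiplicative (ZMod p) ⋊[φ] Multiplicative (ZMod 10),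
      orderOf x = 2 ∧ orderOf y = 5 ∧ orderOf (x * y) = 10 ∧
        Subgroup.closure {x, y} = ⊤ := by
  have := Fact.mk hp
  have hc : ∀ n : ℕ, (ω : ZMod p) ^ n = 1 ↔ 10 ∣ n := fun n => by
    rw [← hω, ← orderOf_units, orderOf_dvd_iff_pow_eq_one]
  set x : Multiplicative (ZMod p) ⋊[φ] Multiplicative (ZMod 10) := ⟨ofAdd 1, ofAdd 5⟩
  set y : Multiplicative (ZMod p) ⋊[φ] Multiplicative (ZMod 10) := ⟨ofAdd 0, ofAdd 6⟩
  have hxy : x * y = ⟨ofAdd 1, ofAdd 1⟩ := by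
    rw [mk_mul_mk_of_apply_ofAdd_one hφ, mul_zero, add_zero]
    rfl
  refine ⟨x, y, ?_, ?_, ?_, ?_⟩
  · rw [orderOf_mk_of_apply_ofAdd_one hφ _ (by rw [Ne, hc]; decide)]
    exact ZMod.addOrderOf_coe 5 (by norm_num)
  · rw [orderOf_mk_of_apply_ofAdd_one hφ _ (by rw [Ne, hc]; decide)]
    exact ZMod.addOrderOf_coe 6 (by norm_num)
  · rw [hxy, orderOf_mk_of_apply_ofAdd_one hφ _ (by rw [Ne, hc]; decide)]
    exact ZMod.addOrderOf_one 10
  · refine closure_pair_eq_top_of_not_commute (by simpa using hp) (fun hcomm => ?_) (by rw [hxy])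
    have hleft := congrArg left hcomm.eq
    rw [mk_mul_mk_of_apply_ofAdd_one hφ, mk_mul_mk_of_apply_ofAdd_one hφ,
      ofAdd.injective.eq_iff] at hleft
    have h6 : (ω : ZMod p) ^ (6 : ZMod 10).val = 1 := by simpa using hleft.symm
    exact absurd ((hc 6).mp h6) (by decide)

/-- For a prime `p ≡ 1 (mod 5)`, the group `G = G_{p,10}` of order `10p` contains an
element `x` of order `2` and an element `y` of order `5` such that `x·y` has order `10` and
`x`, `y` generate `G`: i.e. `G` is a quotient of the von Dyck triangle group of type
`(2,5,10)`, as required for the chiral maps of type `{5,10}` and genus `p + 1`. -/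
theorem stmt_19 (p : ℕ) (hp : p.Prime) (h5 : p % 5 = 1)
    (ω : (ZMod p)ˣ) (hω : orderOf ω = 10)
    (φ : Multiplicative (ZMod 10) →* MulAut (Multiplicative (ZMod p)))
    (hφ : ∀ x : ZMod p,
      (φ (Multiplicative.ofAdd (1 : ZMod 10))) (Multiplicative.ofAdd x)
        = Multiplicative.ofAdd ((ω : ZMod p) * x)) :
    ∃ x y : Multiplicative (ZMod p) ⋊[φ] Multiplicative (ZMod 10),
      orderOf x = 2 ∧ orderOf y = 5 ∧ orderOf (x * y) = 10 ∧
        Subgroup.closure {x, y} = ⊤ :=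
  stmt_19_general p hp ω hω φ hφ
end
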